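/- Fix a string q ∈ A_d^N and sample a uniformly random subset t ⊆ {1,...,N} of size m ≤ N/2. Then the probability that |w(q_t) - w(q_{-t})| > δ is at most 2·exp(-δ²·m·N/(N+2)), where n = N - m. -/

import Mathlib

/-!
Write `X t` for the number of nonzero entries of `q` in `t` and `K = X univ`; the event says that
`X t` deviates from its mean `m K / N` by more than `τ = δ m (N - m) / N`. The moment generating
function of `X` over samples of size `m + 1` is bounded by induction: such a sample is an element
`x` together with a sample of size `m` of the other `N - 1` points, and after centering `x` enters
with weight `1 - m / (N - 1)`. Hoeffding's lemma for the uniformly distributed `x` and the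
induction hypothesis give a sub-Gaussian bound with variance proxy `m (N - m + 1) / N` instead of
Hoeffding's `m`. A Chernoff bound then gives `2 exp (-2 τ² N / (m (N - m + 1)))`, which is at most
the claimed bound when `N ≥ 2 m`.
-/

open Real MeasureTheory ProbabilityTheory Finset

/-- Hoeffding's lemma for the uniform distribution on a finite set. -/
theorem sum_exp_mul_sub_mean_le {α : Type*} {s : Finset α} {f : α → ℝ} {a b : ℝ}
    (hf : ∀ x ∈ s, f x ∈ Set.Icc a b) (t : ℝ) :
    ∑ x ∈ s, exp (t * (f x - (∑ y ∈ s, f y) / #s)) ≤ #s * exp (t ^ 2 * (b - a) ^ 2 / 8) := by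
  rcases s.eq_empty_or_nonempty with rfl | hs
  · simp
  have := hs.coe_sort
  let _ : MeasurableSpace s := ⊤
  let μ : Measure s := (PMF.uniformOfFintype s).toMeasure
  have hμ (g : α → ℝ) : ∫ x : s, g x ∂μ = (∑ x ∈ s, g x) / #s := by
    rw [PMF.integral_eq_sum, ← sum_coe_sort s, sum_div]
    simp [div_eq_inv_mul]
  have hX := (hasSubgaussianMGF_of_mem_Icc (X := fun x : s => f x) (μ := μ) .of_discrete
    (ae_of_all _ fun x => hf x x.2)).mgf_le t
  rw [mgf, hμ f, hμ (fun x => exp (t * (f x - (∑ y ∈ s, f y) / #s))),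
    div_le_iff₀ (by simpa [card_pos])] at hX
  refine hX.trans_eq ?_
  simp only [NNReal.coe_pow, NNReal.coe_div, coe_nnnorm, Real.norm_eq_abs, NNReal.coe_ofNat,
    div_pow, sq_abs]
  ring_nf

/-- Sub-Gaussian variance proxy for the sum of a sample of size `m` drawn without replacement from
`N` points with values in an interval of length `1`. -/
noncomputable def samplingVariance (N m : ℝ) : ℝ := m * (N - m + 1) / N

theorem samplingVariance_add_sq_le {M m : ℝ} (hm : 0 ≤ m) (hmM : m ≤ M) :
    samplingVariance M m + (1 - m / M) ^ 2 ≤ samplingVariance (M + 1) (m + 1) := by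
  unfold samplingVariance
  obtain rfl | hM := (hm.trans hmM).eq_or_lt
  · obtain rfl : m = 0 := le_antisymm hmM hm
    norm_num
  · rw [div_add' _ _ _ hM.ne', div_le_div_iff₀ (by positivity) (by positivity)]
    field_simp
    nlinarith [mul_nonneg hm (sub_nonneg.2 hmM)]

/-- Centering a sample `insert x s` of `M + 1` points: `y = f x` enters with weight `1 - m / M`,
and `T = ∑ i ∈ s, f i` is centered in the remaining `M` points, whose total is `S - y`. -/
theorem add_sub_succ_mul_div_eq {M m y T S : ℝ} (hm : 0 ≤ m) (hmM : m ≤ M) :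
    y + T - (m + 1) * S / (M + 1) = (1 - m / M) * (y - S / (M + 1)) + (T - m * (S - y) / M) := by
  obtain rfl | hM := (hm.trans hmM).eq_or_lt
  · obtain rfl : m = 0 := le_antisymm hmM hm
    simp
    ring
  · field_simp
    ring

section Sampling

variable {α : Type*} [DecidableEq α] {U : Finset α}

theorem sum_powersetCard_erase_insert {x : α} (hx : x ∈ U) (m : ℕ) (g : Finset α → ℝ) :
    ∑ s ∈ (U.erase x).powersetCard m, g (insert x s)
      = ∑ t ∈ U.powersetCard (m + 1) with x ∈ t, g t := by
  refine sum_nbij' (insert x) (·.erase x) ?_ ?_ ?_ ?_ fun _ _ => rfl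
  · intro s hs
    simp only [mem_filter, mem_powersetCard, subset_erase] at hs ⊢
    exact ⟨⟨insert_subset hx hs.1.1, by rw [card_insert_of_notMem hs.1.2, hs.2]⟩,
      mem_insert_self x s⟩
  · intro t ht
    simp only [mem_filter, mem_powersetCard] at ht ⊢
    exact ⟨erase_subset_erase x ht.1.1, by rw [card_erase_of_mem ht.2, ht.1.2, Nat.add_sub_cancel]⟩
  · intro s hs
    exact erase_insert (subset_erase.1 (mem_powersetCard.1 hs).1).2
  · intro t ht
    exact insert_erase (mem_filter.1 ht).2

theorem sum_sum_powersetCard_erase_insert (m : ℕ) (g : Finset α → ℝ) :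
    ∑ x ∈ U, ∑ s ∈ (U.erase x).powersetCard m, g (insert x s)
      = (m + 1) * ∑ t ∈ U.powersetCard (m + 1), g t := by
  rw [sum_congr rfl fun x hx => sum_powersetCard_erase_insert hx m g]
  simp_rw [sum_filter]
  rw [sum_comm, mul_sum]
  refine sum_congr rfl fun t ht => ?_
  obtain ⟨htU, htm⟩ := mem_powersetCard.1 ht
  rw [sum_ite_mem, inter_eq_right.2 htU, sum_const, nsmul_eq_mul, htm]
  push_cast
  ring

theorem sum_powersetCard_erase_exp_insert_le {f : α → ℝ} {x : α} {M m : ℕ} {l B : ℝ}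
    (hx : x ∈ U) (hUM : #U = M + 1) (hmM : m ≤ M)
    (hB : ∑ s ∈ (U.erase x).powersetCard m,
      exp (l * (∑ i ∈ s, f i - m * (∑ i ∈ U.erase x, f i) / #(U.erase x))) ≤ B) :
    ∑ s ∈ (U.erase x).powersetCard m,
        exp (l * (∑ i ∈ insert x s, f i - ((m + 1 : ℕ) : ℝ) * (∑ i ∈ U, f i) / #U))
      ≤ exp (l * (1 - m / M) * (f x - (∑ i ∈ U, f i) / #U)) * B := by
  set e := l * (1 - m / M) * (f x - (∑ i ∈ U, f i) / #U)
  have hcard : #(U.erase x) = M := by rw [card_erase_of_mem hx, hUM, Nat.add_sub_cancel]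
  rw [hcard, sum_erase_eq_sub hx] at hB
  refine (le_of_eq ?_).trans (mul_le_mul_of_nonneg_left hB (exp_pos e).le)
  rw [mul_sum _ _ (exp e)]
  refine sum_congr rfl fun s hs => ?_
  have hxs : x ∉ s := fun h => notMem_erase x U ((mem_powersetCard.1 hs).1 h)
  rw [sum_insert hxs, ← exp_add]
  congr 1
  simp only [e, hUM]
  push_cast
  rw [add_sub_succ_mul_div_eq (by positivity) (by exact_mod_cast hmM)]
  ring

theorem sum_powersetCard_exp_mul_sub_le {f : α → ℝ} {a b : ℝ} (hf : ∀ x ∈ U, f x ∈ Set.Icc a b)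
    (m : ℕ) (l : ℝ) :
    ∑ t ∈ U.powersetCard m, exp (l * (∑ i ∈ t, f i - m * (∑ i ∈ U, f i) / #U))
      ≤ (#U).choose m * exp (l ^ 2 * (b - a) ^ 2 * samplingVariance #U m / 8) := by
  induction m generalizing U with
  | zero => simp [samplingVariance]
  | succ m ih =>
    obtain hlt | ⟨M, hUM, hmM⟩ : #U < m + 1 ∨ ∃ M, #U = M + 1 ∧ m ≤ M := by
      rcases lt_or_ge #U (m + 1) with h | h
      · exact .inl h
      · exact .inr ⟨#U - 1, by omega, by omega⟩
    · simp [powersetCard_eq_empty.2 hlt, Nat.choose_eq_zero_of_lt hlt]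
    set S := ∑ i ∈ U, f i
    set c : ℝ := 1 - m / M
    set B : ℝ := M.choose m * exp (l ^ 2 * (b - a) ^ 2 * samplingVariance M m / 8)
    have hinner : ∀ x ∈ U, ∑ s ∈ (U.erase x).powersetCard m,
        exp (l * (∑ i ∈ insert x s, f i - ((m + 1 : ℕ) : ℝ) * S / #U))
          ≤ exp (l * c * (f x - S / #U)) * B := fun x hx =>
      sum_powersetCard_erase_exp_insert_le hx hUM hmM
        ((ih (U := U.erase x) fun y hy => hf y (mem_of_mem_erase hy)).trans_eq
          (by rw [card_erase_of_mem hx, hUM, Nat.add_sub_cancel]))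
    have hchoose : ((M + 1 : ℕ) : ℝ) * M.choose m = (m + 1 : ℕ) * (M + 1).choose (m + 1) := by
      exact_mod_cast (Nat.add_one_mul_choose_eq M m).trans (mul_comm _ _)
    have hvar : (l * c) ^ 2 * (b - a) ^ 2 / 8 + l ^ 2 * (b - a) ^ 2 * samplingVariance M m / 8
        ≤ l ^ 2 * (b - a) ^ 2 * samplingVariance (M + 1 : ℕ) (m + 1 : ℕ) / 8 := by
      have := samplingVariance_add_sq_le (M := M) (m := m) (by positivity) (by exact_mod_cast hmM)
      push_cast
      nlinarith [mul_le_mul_of_nonneg_left this (by positivity : 0 ≤ l ^ 2 * (b - a) ^ 2)]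
    refine le_of_mul_le_mul_left ?_ (by positivity : (0 : ℝ) < (m + 1 : ℕ))
    calc ((m + 1 : ℕ) : ℝ) * ∑ t ∈ U.powersetCard (m + 1),
          exp (l * (∑ i ∈ t, f i - ((m + 1 : ℕ) : ℝ) * S / #U))
        = ∑ x ∈ U, ∑ s ∈ (U.erase x).powersetCard m,
            exp (l * (∑ i ∈ insert x s, f i - ((m + 1 : ℕ) : ℝ) * S / #U)) := by
          exact_mod_cast (sum_sum_powersetCard_erase_insert m _).symm
      _ ≤ ∑ x ∈ U, exp (l * c * (f x - S / #U)) * B := sum_le_sum hinner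
      _ ≤ #U * exp ((l * c) ^ 2 * (b - a) ^ 2 / 8) * B := by
          rw [← sum_mul]
          gcongr
          exact sum_exp_mul_sub_mean_le hf (l * c)
      _ ≤ _ := by
          rw [hUM, mul_mul_mul_comm, hchoose, ← exp_add, mul_assoc]
          gcongr

end Sampling

section Chernoff

variable {ι : Type*} {P : Finset ι} {g : ι → ℝ} {A V τ : ℝ}

theorem card_filter_le_of_sum_exp_le (hV : 0 < V) (hτ : 0 ≤ τ)
    (h : ∀ l, ∑ i ∈ P, exp (l * g i) ≤ A * exp (l ^ 2 * V / 8)) :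
    (#{i ∈ P | τ ≤ g i} : ℝ) ≤ A * exp (-(2 * τ ^ 2 / V)) := by
  set l := 4 * τ / V
  have hl : 0 ≤ l := by positivity
  calc (#{i ∈ P | τ ≤ g i} : ℝ) = ∑ i ∈ P with τ ≤ g i, 1 := by simp
    _ ≤ ∑ i ∈ P with τ ≤ g i, exp (l * g i - l * τ) :=
        sum_le_sum fun i hi => one_le_exp (by nlinarith [(mem_filter.1 hi).2])
    _ ≤ ∑ i ∈ P, exp (l * g i - l * τ) :=
        sum_le_sum_of_subset_of_nonneg (filter_subset _ _) fun _ _ _ => (exp_pos _).le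
    _ = (∑ i ∈ P, exp (l * g i)) * exp (-(l * τ)) := by
        rw [sum_mul]
        simp only [sub_eq_add_neg, exp_add]
    _ ≤ A * exp (l ^ 2 * V / 8) * exp (-(l * τ)) := by gcongr; exact h l
    _ = A * exp (-(2 * τ ^ 2 / V)) := by
        rw [mul_assoc, ← exp_add]
        congr 2
        simp only [l]
        field_simp
        ring

theorem card_filter_le_abs_of_sum_exp_le (hV : 0 < V) (hτ : 0 ≤ τ)
    (h : ∀ l, ∑ i ∈ P, exp (l * g i) ≤ A * exp (l ^ 2 * V / 8)) :
    (#{i ∈ P | τ ≤ |g i|} : ℝ) ≤ 2 * A * exp (-(2 * τ ^ 2 / V)) := by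
  classical
  have hneg (l : ℝ) : ∑ i ∈ P, exp (l * -g i) ≤ A * exp (l ^ 2 * V / 8) := by
    simpa using h (-l)
  have hsub : {i ∈ P | τ ≤ |g i|} ⊆ {i ∈ P | τ ≤ g i} ∪ {i ∈ P | τ ≤ -g i} := fun i hi => by
    simp only [mem_union, mem_filter, le_abs] at hi ⊢
    tauto
  calc (#{i ∈ P | τ ≤ |g i|} : ℝ) ≤ #{i ∈ P | τ ≤ g i} + #{i ∈ P | τ ≤ -g i} := by
        exact_mod_cast (card_le_card hsub).trans (card_union_le _ _)
    _ ≤ A * exp (-(2 * τ ^ 2 / V)) + A * exp (-(2 * τ ^ 2 / V)) :=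
        add_le_add (card_filter_le_of_sum_exp_le hV hτ h) (card_filter_le_of_sum_exp_le hV hτ hneg)
    _ = 2 * A * exp (-(2 * τ ^ 2 / V)) := by ring

end Chernoff

theorem card_filter_le_abs_sum_sub_mean_le {α : Type*} [DecidableEq α] {U : Finset α}
    {f : α → ℝ} {a b τ : ℝ} (hf : ∀ x ∈ U, f x ∈ Set.Icc a b) {m : ℕ}
    (hV : 0 < (b - a) ^ 2 * samplingVariance #U m) (hτ : 0 ≤ τ) :
    (#{t ∈ U.powersetCard m | τ ≤ |∑ i ∈ t, f i - m * (∑ i ∈ U, f i) / #U|} : ℝ)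
      ≤ 2 * (#U).choose m * exp (-(2 * τ ^ 2 / ((b - a) ^ 2 * samplingVariance #U m))) :=
  card_filter_le_abs_of_sum_exp_le hV hτ fun l => by
    simpa only [mul_assoc] using sum_powersetCard_exp_mul_sub_le hf m l

theorem le_abs_sub_of_lt_abs_div_sub_div {x K m N δ : ℝ} (hm : 0 < m) (hmN : m < N)
    (h : δ < |x / m - (K - x) / (N - m)|) : δ * m * (N - m) / N ≤ |x - m * K / N| := by
  have hN : 0 < N := hm.trans hmN
  have hn : 0 < N - m := sub_pos.2 hmN
  have hx : x / m - (K - x) / (N - m) = N / (m * (N - m)) * (x - m * K / N) := by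
    field_simp
    ring
  rw [hx, abs_mul, abs_of_pos (by positivity), div_mul_eq_mul_div, lt_div_iff₀ (by positivity)] at h
  rw [div_le_iff₀ hN]
  linarith

/-- Equality holds at `N = 2 m`. -/
theorem neg_two_mul_sq_div_samplingVariance_le {δ m N : ℝ} (hm : 0 < m) (hmN : 2 * m ≤ N) :
    -(2 * (δ * m * (N - m) / N) ^ 2 / samplingVariance N m) ≤ -δ ^ 2 * m * N / (N + 2) := by
  have hN : 0 < N := by linarith
  have hn : 0 < N - m := by linarith
  have hpoly : N ^ 2 * (N - m + 1) ≤ 2 * (N - m) ^ 2 * (N + 2) := by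
    nlinarith [mul_nonneg (mul_nonneg (sub_nonneg.2 hmN) hn.le) hN.le,
      mul_nonneg (sub_nonneg.2 hmN) (by linarith : (0 : ℝ) ≤ 2 * (N - m) + N)]
  rw [samplingVariance, neg_mul, neg_mul, neg_div, neg_le_neg_iff]
  field_simp
  nlinarith [mul_le_mul_of_nonneg_left hpoly (sq_nonneg δ)]

/-- Classical sampling bound: for a fixed `q ∈ A_d^N` and a uniformly random
subset `t` of size `m ≤ N/2`, the probability that the relative Hamming weights
of `q_t` and `q_{-t}` differ by more than `δ` is at most `2·exp(-δ²mN/(N+2))`. -/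
theorem stmt4 (d N m : ℕ) (hm : 0 < m) (hmN : 2 * m ≤ N)
    (q : Fin N → Fin d) (δ : ℝ) (hδ : 0 < δ) :
    ((((Finset.univ : Finset (Fin N)).powersetCard m).filter (fun t =>
        |((t.filter (fun k => (q k : ℕ) ≠ 0)).card : ℝ) / m -
          ((tᶜ.filter (fun k => (q k : ℕ) ≠ 0)).card : ℝ) / ((N : ℝ) - m)| > δ)).card : ℝ) /
      (((Finset.univ : Finset (Fin N)).powersetCard m).card : ℝ)
      ≤ 2 * Real.exp (-(δ ^ 2) * m * N / ((N : ℝ) + 2)) := by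
  set f : Fin N → ℝ := fun k => if (q k : ℕ) ≠ 0 then 1 else 0
  have hf : ∀ k ∈ (univ : Finset (Fin N)), f k ∈ Set.Icc (0 : ℝ) 1 := fun k _ => by
    unfold f
    split_ifs <;> norm_num
  have hcount (t : Finset (Fin N)) :
      ((t.filter fun k => (q k : ℕ) ≠ 0).card : ℝ) = ∑ k ∈ t, f k :=
    (sum_boole _ _).symm
  have hmR : (0 : ℝ) < m := by exact_mod_cast hm
  have hmN' : (m : ℝ) < N := by norm_cast; omega
  set τ : ℝ := δ * m * (N - m) / N
  have hτ : 0 ≤ τ := by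
    have := sub_pos.2 hmN'
    positivity
  have hV : 0 < samplingVariance N m := div_pos (mul_pos hmR (by linarith)) (by linarith)
  rw [div_le_iff₀ (by simpa using Nat.choose_pos (by omega : m ≤ N)), card_powersetCard,
    card_univ, Fintype.card_fin]
  calc _ ≤ (#{t ∈ univ.powersetCard m | τ ≤ |∑ k ∈ t, f k - m * (∑ k, f k) / N|} : ℝ) := by
        refine Nat.cast_le.2 (card_le_card (monotone_filter_right _ fun t _ hdev => ?_))
        rw [hcount, hcount, eq_sub_of_add_eq (sum_compl_add_sum t f)] at hdev
        exact le_abs_sub_of_lt_abs_div_sub_div hmR hmN' hdev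
    _ ≤ 2 * N.choose m * exp (-(2 * τ ^ 2 / samplingVariance N m)) := by
        simpa using card_filter_le_abs_sum_sub_mean_le hf (by simpa using hV) hτ
    _ ≤ 2 * exp (-δ ^ 2 * m * N / (N + 2)) * N.choose m := by
        rw [mul_right_comm]
        gcongr
        exact neg_two_mul_sq_div_samplingVariance_le hmR (by exact_mod_cast hmN)
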